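/- arXiv:1611.06626 — 2 statements merged into one kernel-verified Lean document; each statement's English description precedes it below -/
import Mathlib

section
/- Let π be a minimal valid function. Suppose that for every minimal valid function π', the inclusion E(π) ⊆ E(π') implies π' = π. Then π is a facet. -/
/-- A finite-support function `y : ℝ → ℕ` is feasible if `∑ r, r·y(r) − f ∈ ℤ`. -/
def Feasible (f : ℝ) (y : ℝ →₀ ℕ) : Prop :=
  ∃ z : ℤ, (∑ r ∈ y.support, r * (y r : ℝ)) - f = (z : ℝ)

/-- `π` is a valid function: nonnegative, and `∑ r, π(r)·y(r) ≥ 1` for every feasible `y`. -/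
def Valid (f : ℝ) (π : ℝ → ℝ) : Prop :=
  (∀ x, 0 ≤ π x) ∧
    ∀ y : ℝ →₀ ℕ, Feasible f y → 1 ≤ ∑ r ∈ y.support, π r * (y r : ℝ)

/-- A valid function is minimal if no other valid function is pointwise ≤ it. -/
def MinimalValid (f : ℝ) (π : ℝ → ℝ) : Prop :=
  Valid f π ∧ ¬ ∃ π' : ℝ → ℝ, Valid f π' ∧ (∀ x, π' x ≤ π x) ∧ π' ≠ π

/-- `P(π)`: the set of feasible `y` with `∑ r, π(r)·y(r) = 1`. -/
def Pset (f : ℝ) (π : ℝ → ℝ) : Set (ℝ →₀ ℕ) :=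
  {y | Feasible f y ∧ ∑ r ∈ y.support, π r * (y r : ℝ) = 1}

/-- `E(π) = {(x,y) : π(x) + π(y) = π(x+y)}`. -/
def Eset (π : ℝ → ℝ) : Set (ℝ × ℝ) :=
  {p | π p.1 + π p.2 = π (p.1 + p.2)}

/-- A valid function `π` is a facet if every valid `π'` with `P(π) ⊆ P(π')` equals `π`. -/
def IsFacet (f : ℝ) (π : ℝ → ℝ) : Prop :=
  Valid f π ∧ ∀ π' : ℝ → ℝ, Valid f π' → Pset f π ⊆ Pset f π' → π' = π

/-- A valid function `π` is a weak facet if every valid `π'` with `P(π) ⊆ P(π')`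
has `P(π) = P(π')`. -/
def IsWeakFacet (f : ℝ) (π : ℝ → ℝ) : Prop :=
  Valid f π ∧ ∀ π' : ℝ → ℝ, Valid f π' → Pset f π ⊆ Pset f π' → Pset f π = Pset f π'

/-- A valid function `π` is extreme if whenever `π = (π¹ + π²)/2` with `π¹, π²` valid,
then `π¹ = π² = π`. -/
def ExtremeFunc (f : ℝ) (π : ℝ → ℝ) : Prop :=
  Valid f π ∧ ∀ π₁ π₂ : ℝ → ℝ, Valid f π₁ → Valid f π₂ →
    (∀ x, π x = (π₁ x + π₂ x) / 2) → π₁ = π ∧ π₂ = π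

/-- `π` is piecewise linear: there is a closed, discrete set `B ⊆ ℝ` of breakpoints
such that `π` is affine on each connected component of `ℝ \ B`. -/
def PiecewiseLinear (π : ℝ → ℝ) : Prop :=
  ∃ B : Set ℝ, IsClosed B ∧
    (∀ x ∈ B, ∃ ε > (0 : ℝ), ∀ y ∈ B, |y - x| < ε → y = x) ∧
    (∀ x ∉ B, ∃ a b : ℝ, ∀ z ∈ connectedComponentIn Bᶜ x, π z = a * z + b)

/-- `π` is continuous piecewise linear. -/
def ContPiecewiseLinear (π : ℝ → ℝ) : Prop :=
  PiecewiseLinear π ∧ Continuous π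

/-!
A minimal valid function is subadditive, vanishes at `0` and is symmetric:
`π x + π (f - x) = 1`. Symmetry makes `e_{u+v} + e_{f-u-v}` and `e_u + e_v + e_{f-u-v}` tight
for `π` whenever `(u, v) ∈ E(π)`, so any valid `π'` with `P(π) ⊆ P(π')` satisfies
`E(π) ⊆ E(π')`. By Zorn's lemma such a `π'` dominates a minimal valid `ρ`, which still has
`P(π) ⊆ P(ρ)`, hence `E(π) ⊆ E(ρ)` and `ρ = π` by hypothesis. So `π ≤ π'`, and the tight pairs
`e_x + e_{f-x}` force equality.
-/

open Finsupp

section Weight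

variable {f : ℝ} {π g g₁ g₂ : ℝ → ℝ} {y : ℝ →₀ ℕ}

theorem sum_mul_eq_weight (g : ℝ → ℝ) (y : ℝ →₀ ℕ) :
    ∑ r ∈ y.support, g r * (y r : ℝ) = weight g y := by
  simp only [weight_apply, Finsupp.sum, nsmul_eq_mul, mul_comm]

theorem feasible_iff : Feasible f y ↔ ∃ z : ℤ, weight id y - f = z := by
  rw [← sum_mul_eq_weight]
  rfl

theorem valid_iff : Valid f π ↔ (∀ x, 0 ≤ π x) ∧ ∀ y, Feasible f y → 1 ≤ weight π y := by
  simp only [Valid, sum_mul_eq_weight]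

theorem mem_Pset_iff : y ∈ Pset f π ↔ Feasible f y ∧ weight π y = 1 := by
  simp only [Pset, Set.mem_ofPred_eq, sum_mul_eq_weight]

theorem weight_congr (h : ∀ r ∈ y.support, g₁ r = g₂ r) : weight g₁ y = weight g₂ y := by
  simp only [weight_apply]
  exact Finsupp.sum_congr fun r hr => by rw [h r hr]

theorem weight_mono (h : ∀ r ∈ y.support, g₁ r ≤ g₂ r) : weight g₁ y ≤ weight g₂ y :=
  Finset.sum_le_sum fun r hr => nsmul_le_nsmul_right (h r hr) _

theorem weight_add_const (c : ℝ) : weight (fun r => g r + c) y = weight g y + y.degree • c := by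
  simp only [weight_apply, Finsupp.sum, smul_add, Finset.sum_add_distrib, degree_apply,
    Finset.sum_smul]

theorem weight_eq_add_weight_erase (x : ℝ) : weight g y = y x • g x + weight g (y.erase x) := by
  conv_lhs => rw [← single_add_erase x y]
  rw [map_add, weight_single]

theorem weight_update (x c : ℝ) :
    weight (Function.update g x c) y = y x • c + weight g (y.erase x) := by
  rw [weight_eq_add_weight_erase x, Function.update_self]
  congr 1
  refine weight_congr fun r hr => Function.update_of_ne ?_ _ _
  classical
  rw [support_erase] at hr
  exact Finset.ne_of_mem_erase hr

end Weight

theorem IsChain.exists_forall_apply_lt {ι β : Type*} [Preorder β] {C : Set (ι → β)}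
    (hC : IsChain (· ≤ ·) C) (hne : C.Nonempty) (b : ι → β) (s : Finset ι)
    (h : ∀ i ∈ s, ∃ ρ ∈ C, ρ i < b i) : ∃ ρ ∈ C, ∀ i ∈ s, ρ i < b i := by
  classical
  induction s using Finset.induction_on with
  | empty => exact hne.imp fun ρ hρ => ⟨hρ, by simp⟩
  | insert a s _ ih =>
    obtain ⟨ρ₁, hρ₁, h₁⟩ := ih fun i hi => h i (Finset.mem_insert_of_mem hi)
    obtain ⟨ρ₂, hρ₂, h₂⟩ := h a (Finset.mem_insert_self a s)
    simp only [Finset.forall_mem_insert]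
    rcases hC.total hρ₁ hρ₂ with h12 | h21
    · exact ⟨ρ₁, hρ₁, (h12 a).trans_lt h₂, h₁⟩
    · exact ⟨ρ₂, hρ₂, h₂, fun i hi => (h21 i).trans_lt (h₁ i hi)⟩

section Valid

variable {f : ℝ} {π ρ : ℝ → ℝ} {y : ℝ →₀ ℕ}

theorem Valid.one_le_weight (hπ : Valid f π) (hy : Feasible f y) : 1 ≤ weight π y :=
  (valid_iff.1 hπ).2 y hy

theorem Valid.one_le_apply (hπ : Valid f π) (z : ℤ) : 1 ≤ π (f + z) := by
  simpa [weight_single] using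
    hπ.one_le_weight (y := single (f + z) 1) (feasible_iff.2 ⟨z, by simp [weight_single]⟩)

theorem Valid.int_le_apply (hπ : Valid f π) {n : ℤ} (hn : n ≤ 1) (z : ℤ) :
    (n : ℝ) ≤ π (n * f + z) := by
  rcases hn.lt_or_eq with hn | rfl
  · have : (n : ℝ) ≤ 0 := by exact_mod_cast Int.lt_add_one_iff.1 hn
    exact this.trans (hπ.1 _)
  · simpa using hπ.one_le_apply z

theorem Valid.one_le_apply_add_apply_sub (hπ : Valid f π) (x : ℝ) : 1 ≤ π x + π (f - x) := by
  have := hπ.one_le_weight (y := single x 1 + single (f - x) 1)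
    (feasible_iff.2 ⟨0, by simp [weight_single]⟩)
  rw [map_add, weight_single, weight_single] at this
  simpa using this

theorem Valid.Pset_subset_of_le (hρ : Valid f ρ) (hle : ρ ≤ π) : Pset f π ⊆ Pset f ρ := by
  intro y hy
  rw [mem_Pset_iff] at hy ⊢
  exact ⟨hy.1, le_antisymm (hy.2 ▸ weight_mono fun r _ => hle r) (hρ.one_le_weight hy.1)⟩

theorem Valid.update (hπ : Valid f π) {x c : ℝ} (hc : 0 ≤ c)
    (h : ∀ y, Feasible f y → y x ≠ 0 → 1 ≤ y x • c + weight π (y.erase x)) :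
    Valid f (Function.update π x c) := by
  refine valid_iff.2 ⟨fun r => ?_, fun y hy => ?_⟩
  · rcases eq_or_ne r x with rfl | hr
    · simpa using hc
    · simpa [Function.update_of_ne hr] using hπ.1 r
  · rw [weight_update]
    by_cases hyx : y x = 0
    · rw [hyx, zero_smul, zero_add, erase_of_notMem_support (by simpa using hyx)]
      exact hπ.one_le_weight hy
    · exact h y hy hyx

theorem Valid.sInf_of_isChain {C : Set (ℝ → ℝ)} (hne : C.Nonempty) (hC : IsChain (· ≤ ·) C)
    (hV : ∀ ρ ∈ C, Valid f ρ) : Valid f (sInf C) := by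
  refine valid_iff.2 ⟨le_csInf hne fun ρ hρ => (hV ρ hρ).1, fun y hy => ?_⟩
  refine le_of_forall_pos_lt_add fun ε hε => ?_
  set δ := ε / (y.degree + 1)
  have hδ : 0 < δ := by positivity
  obtain ⟨ρ, hρ, hlt⟩ := hC.exists_forall_apply_lt hne (fun x => sInf C x + δ) y.support
    fun x _ => by
      have : sInf (Function.eval x '' C) < sInf C x + δ := by
        rw [← sInf_apply_eq_sInf_image]
        exact lt_add_of_pos_right _ hδ
      obtain ⟨_, ⟨ρ, hρ, rfl⟩, h⟩ := exists_lt_of_csInf_lt (hne.image _) this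
      exact ⟨ρ, hρ, h⟩
  calc 1 ≤ weight ρ y := (hV ρ hρ).one_le_weight hy
    _ ≤ weight (fun x => sInf C x + δ) y := weight_mono fun r hr => (hlt r hr).le
    _ = weight (sInf C) y + y.degree * δ := by rw [weight_add_const, nsmul_eq_mul]
    _ < weight (sInf C) y + ε := by
      gcongr
      rw [mul_div_assoc', div_lt_iff₀ (by positivity)]
      linarith

theorem Valid.exists_minimalValid_le (hπ : Valid f π) :
    ∃ ρ, MinimalValid f ρ ∧ ρ ≤ π := by
  have hlb : ∀ C : Set (ℝ → ℝ), C ⊆ {ρ | Valid f ρ} → IsChain (· ≤ ·) C → C.Nonempty →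
      ∃ lb ∈ {ρ | Valid f ρ}, ∀ ρ ∈ C, lb ≤ ρ := fun C hCV hC hne =>
    ⟨sInf C, Valid.sInf_of_isChain hne hC hCV,
      fun ρ hρ => csInf_le ⟨0, fun τ hτ x => (hCV hτ).1 x⟩ hρ⟩
  obtain ⟨ρ, hρπ, hρ, hmax⟩ := @zorn_le_nonempty₀ (ℝ → ℝ)ᵒᵈ _ {ρ | Valid f ρ}
    (fun C hCV hC ρ hρ => hlb C hCV hC.symm ⟨ρ, hρ⟩) π hπ
  exact ⟨ρ, ⟨hρ, fun ⟨σ, hσ, hσρ, hne⟩ => hne (le_antisymm hσρ (hmax hσ hσρ))⟩, hρπ⟩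

end Valid

namespace MinimalValid

variable {f : ℝ} {π ρ : ℝ → ℝ}

theorem apply_le_of_valid_update (hπ : MinimalValid f π) {x c : ℝ}
    (h : Valid f (Function.update π x c)) : π x ≤ c := by
  by_contra! hlt
  refine hπ.2 ⟨_, h, update_le_self_iff.2 hlt.le, fun he => ?_⟩
  exact hlt.ne (Function.update_eq_self_iff.1 he)

theorem apply_zero (hπ : MinimalValid f π) : π 0 = 0 := by
  refine le_antisymm (hπ.apply_le_of_valid_update (hπ.1.update le_rfl fun y hy _ => ?_)) (hπ.1.1 0)
  have hw : weight id (y.erase 0) = weight id y := by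
    simp [weight_eq_add_weight_erase (g := id) (y := y) 0]
  rw [smul_zero, zero_add]
  exact hπ.1.one_le_weight (feasible_iff.2 (hw ▸ feasible_iff.1 hy))

theorem apply_add_le (hπ : MinimalValid f π) (a b : ℝ) : π (a + b) ≤ π a + π b := by
  refine hπ.apply_le_of_valid_update
    (hπ.1.update (add_nonneg (hπ.1.1 a) (hπ.1.1 b)) fun y hy _ => ?_)
  set y' := single a (y (a + b)) + single b (y (a + b)) + y.erase (a + b)
  have hw : weight id y' = weight id y := by
    simp [y', weight_single, weight_eq_add_weight_erase (g := id) (y := y) (a + b), smul_add]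
  have := hπ.1.one_le_weight (y := y') (feasible_iff.2 (hw ▸ feasible_iff.1 hy))
  simpa [y', weight_single, smul_add, add_assoc] using this

theorem apply_natCast_mul_le (hπ : MinimalValid f π) (n : ℕ) (a : ℝ) : π (n * a) ≤ n * π a := by
  induction n with
  | zero => simp [hπ.apply_zero]
  | succ n ih =>
    push_cast
    calc π ((n + 1) * a) = π (n * a + a) := by rw [add_one_mul]
      _ ≤ π (n * a) + π a := hπ.apply_add_le _ _
      _ ≤ (n + 1) * π a := by linarith

theorem apply_weight_le (hπ : MinimalValid f π) (y : ℝ →₀ ℕ) : π (weight id y) ≤ weight π y := by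
  induction y using Finsupp.induction_linear with
  | zero => simp [hπ.apply_zero]
  | add y₁ y₂ h₁ h₂ => simpa using (hπ.apply_add_le _ _).trans (add_le_add h₁ h₂)
  | single a n => simpa [weight_single, nsmul_eq_mul] using hπ.apply_natCast_mul_le n a

theorem exists_lt_one_of_lt (hπ : MinimalValid f π) {x c : ℝ} (hc : 0 ≤ c) (hlt : c < π x) :
    ∃ m : ℕ, m ≠ 0 ∧ ∃ z : ℤ, m * c + π (f + z - m * x) < 1 := by
  by_contra! H
  refine hlt.not_ge (hπ.apply_le_of_valid_update (hπ.1.update hc fun y hy hyx => ?_))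
  obtain ⟨z, hz⟩ := feasible_iff.1 hy
  have hw : weight id (y.erase x) = f + z - y x * x := by
    have := weight_eq_add_weight_erase (g := id) (y := y) x
    simp only [id, nsmul_eq_mul] at this
    linarith
  calc 1 ≤ y x * c + π (f + z - y x * x) := H _ hyx z
    _ ≤ y x • c + weight π (y.erase x) := by
      rw [nsmul_eq_mul, ← hw]
      gcongr
      exact hπ.apply_weight_le _

theorem apply_le_one (hπ : MinimalValid f π) (x : ℝ) : π x ≤ 1 := by
  by_contra! hlt
  obtain ⟨m, hm, z, h⟩ := hπ.exists_lt_one_of_lt zero_le_one hlt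
  have : (1 : ℝ) ≤ m := by exact_mod_cast Nat.one_le_iff_ne_zero.2 hm
  linarith [hπ.1.1 (f + z - m * x)]

/- If `π x + π (f - x) > 1`, minimality yields `B ≡ f - m x` blocking `π x ↦ 1 - π (f - x)`, and
then `B₂ ≡ f - k (f - x)` blocking `π (f - x) ↦ (m - 1 + π B) / m`. Since
`m B₂ + k B ≡ (m + k - m k) f` with `m + k - m k ≤ 1`, validity bounds `π (m B₂ + k B)` from below
by `m + k - m k`, contradicting subadditivity. -/
theorem apply_add_apply_sub (hπ : MinimalValid f π) (x : ℝ) : π x + π (f - x) = 1 := by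
  refine le_antisymm ?_ (hπ.1.one_le_apply_add_apply_sub x)
  by_contra! hgt
  obtain ⟨m, hm, z, hB⟩ := hπ.exists_lt_one_of_lt (x := x) (c := 1 - π (f - x))
    (by linarith [hπ.apply_le_one (f - x)]) (by linarith)
  set B := f + z - m * x
  have hm1 : (1 : ℤ) ≤ m := by exact_mod_cast Nat.one_le_iff_ne_zero.2 hm
  have hm1' : (1 : ℝ) ≤ m := by exact_mod_cast hm1
  have hm0 : (0 : ℝ) < m := by linarith
  obtain ⟨k, hk, w, hB₂⟩ := hπ.exists_lt_one_of_lt (x := f - x) (c := (m - 1 + π B) / m)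
    (div_nonneg (by linarith [hπ.1.1 B]) hm0.le) (by rw [div_lt_iff₀ hm0]; linarith)
  set B₂ := f + w - k * (f - x)
  have hk1 : (1 : ℤ) ≤ k := by exact_mod_cast Nat.one_le_iff_ne_zero.2 hk
  have hlow := hπ.1.int_le_apply (n := m + k - m * k)
    (by nlinarith [mul_nonneg (sub_nonneg.2 hm1) (sub_nonneg.2 hk1)]) (m * w + k * z)
  have heq : ((m + k - m * k : ℤ) : ℝ) * f + ((m * w + k * z : ℤ) : ℝ) = m * B₂ + k * B := by
    push_cast
    ring
  have hup : π (m * B₂ + k * B) ≤ m * π B₂ + k * π B :=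
    (hπ.apply_add_le _ _).trans
      (add_le_add (hπ.apply_natCast_mul_le m B₂) (hπ.apply_natCast_mul_le k B))
  have hB₂' : (m - 1 + π B) * k + m * π B₂ < m := by
    have hc : (m : ℝ) * ((m - 1 + π B) / m) = m - 1 + π B := mul_div_cancel₀ _ hm0.ne'
    calc (m - 1 + π B) * k + m * π B₂ = m * (k * ((m - 1 + π B) / m) + π B₂) := by
          linear_combination (-(k : ℝ)) * hc
      _ < m * 1 := mul_lt_mul_of_pos_left hB₂ hm0
      _ = m := mul_one _
  rw [heq] at hlow
  push_cast at hlow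
  linarith

theorem single_add_single_mem_Pset (hπ : MinimalValid f π) (x : ℝ) :
    single x 1 + single (f - x) 1 ∈ Pset f π :=
  mem_Pset_iff.2 ⟨feasible_iff.2 ⟨0, by simp [weight_single]⟩,
    by simpa [weight_single] using hπ.apply_add_apply_sub x⟩

theorem Eset_subset_of_Pset_subset (hπ : MinimalValid f π) (hP : Pset f π ⊆ Pset f ρ) :
    Eset π ⊆ Eset ρ := by
  rintro ⟨u, v⟩ (huv : π u + π v = π (u + v))
  have h₃ : single u 1 + single v 1 + single (f - (u + v)) 1 ∈ Pset f π :=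
    mem_Pset_iff.2 ⟨feasible_iff.2 ⟨0, by simp [weight_single]⟩,
      by simp [weight_single]; linarith [hπ.apply_add_apply_sub (u + v)]⟩
  have h₂ := (mem_Pset_iff.1 (hP (hπ.single_add_single_mem_Pset (u + v)))).2
  have h₃' := (mem_Pset_iff.1 (hP h₃)).2
  simp only [map_add, weight_single, one_smul] at h₂ h₃'
  show ρ u + ρ v = ρ (u + v)
  linarith

theorem eq_of_le_of_Pset_subset (hπ : MinimalValid f π) (hle : π ≤ ρ)
    (hP : Pset f π ⊆ Pset f ρ) : ρ = π := by
  funext x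
  have h := (mem_Pset_iff.1 (hP (hπ.single_add_single_mem_Pset x))).2
  simp only [map_add, weight_single, one_smul] at h
  linarith [hle x, hle (f - x), hπ.apply_add_apply_sub x]

end MinimalValid

theorem stmt0_general (f : ℝ) (π : ℝ → ℝ)
    (hπ : MinimalValid f π)
    (h : ∀ π' : ℝ → ℝ, MinimalValid f π' → Eset π ⊆ Eset π' → π' = π) :
    IsFacet f π := by
  refine ⟨hπ.1, fun π' hπ' hP => ?_⟩
  obtain ⟨ρ, hρ, hρπ'⟩ := hπ'.exists_minimalValid_le
  have hPρ : Pset f π ⊆ Pset f ρ := hP.trans (hρ.1.Pset_subset_of_le hρπ')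
  obtain rfl : ρ = π := h ρ hρ (hπ.Eset_subset_of_Pset_subset hPρ)
  exact hπ.eq_of_le_of_Pset_subset hρπ' hP

theorem stmt0 (f : ℝ) (hf : f ∈ Set.Ioo (0 : ℝ) 1) (π : ℝ → ℝ)
    (hπ : MinimalValid f π)
    (h : ∀ π' : ℝ → ℝ, MinimalValid f π' → Eset π ⊆ Eset π' → π' = π) :
    IsFacet f π :=
  stmt0_general f π hπ h
end

section
/- Let π be a minimal valid function. Suppose that for every minimal valid function π', the inclusion P(π) ⊆ P(π') implies P(π) = P(π'). Then π is a weak facet, i.e., for every valid function π' (not necessarily minimal) with P(π) ⊆ P(π') one has P(π) = P(π'). -/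
-- auxiliary: chain approximation lemma
lemma chain_approx (c : Set (ℝ → ℝ)) (hc : IsChain (· ≤ ·) c)
    (hbdd : ∀ p ∈ c, ∀ x, 0 ≤ p x) (p₀ : ℝ → ℝ) (hp₀ : p₀ ∈ c)
    (t : Finset ℝ) {ε : ℝ} (hε : 0 < ε) :
    ∃ p ∈ c, ∀ r ∈ t, p r < sInf ((fun q => q r) '' c) + ε := by
  classical
  induction t using Finset.induction_on with
  | empty => exact ⟨p₀, hp₀, fun r hr => absurd hr (by simp)⟩
  | @insert a t ha ih =>
    obtain ⟨p, hpc, hp⟩ := ih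
    have hne : ((fun q => q a) '' c).Nonempty := ⟨p₀ a, p₀, hp₀, rfl⟩
    obtain ⟨v, ⟨q, hqc, rfl⟩, hv⟩ := Real.lt_sInf_add_pos hne hε
    rcases hc.total hpc hqc with hle | hle
    · exact ⟨p, hpc, fun r hr => by
        rcases Finset.mem_insert.1 hr with rfl | hr
        · exact lt_of_le_of_lt (hle r) hv
        · exact hp r hr⟩
    · exact ⟨q, hqc, fun r hr => by
        rcases Finset.mem_insert.1 hr with rfl | hr
        · exact hv
        · exact lt_of_le_of_lt (hle r) (hp r hr)⟩

lemma exists_minimal_valid_le (f : ℝ) (π' : ℝ → ℝ) (hv : Valid f π') :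
    ∃ m : ℝ → ℝ, MinimalValid f m ∧ ∀ x, m x ≤ π' x := by
  classical
  -- Zorn in the dual order on the set of valid functions
  have := zorn_le_nonempty₀ (α := (ℝ → ℝ)ᵒᵈ) {g | Valid f (OrderDual.ofDual g)}
    (fun c hcs hchain y hy => ?_) (OrderDual.toDual π') hv
  · obtain ⟨m, hm_le, hm_mem, hm_max⟩ := this
    refine ⟨OrderDual.ofDual m, ⟨hm_mem, ?_⟩, hm_le⟩
    rintro ⟨g, hg, hgle, hgne⟩
    exact hgne (le_antisymm hgle (hm_max hg hgle))
  · -- chains have lower bounds (upper bounds in the dual)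
    set c' : Set (ℝ → ℝ) := OrderDual.ofDual '' c with hc'
    have hc'chain : IsChain (· ≤ ·) c' := by
      rintro _ ⟨p, hp, rfl⟩ _ ⟨q, hq, rfl⟩ hne
      exact (hchain hp hq (fun h => hne (congrArg _ h))).symm
    have hc'valid : ∀ p ∈ c', Valid f p := by
      rintro _ ⟨p, hp, rfl⟩; exact hcs hp
    have hnonneg : ∀ p ∈ c', ∀ x, 0 ≤ p x := fun p hp x => (hc'valid p hp).1 x
    have hy' : OrderDual.ofDual y ∈ c' := ⟨y, hy, rfl⟩
    set g : ℝ → ℝ := fun x => sInf ((fun q => q x) '' c') with hg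
    have hbdd : ∀ x, BddBelow ((fun q => q x) '' c') := by
      intro x; exact ⟨0, by rintro _ ⟨p, hp, rfl⟩; exact hnonneg p hp x⟩
    have hne : ∀ x, ((fun q => q x) '' c').Nonempty :=
      fun x => ⟨_, _, hy', rfl⟩
    have hglb : ∀ p ∈ c', ∀ x, g x ≤ p x := by
      intro p hp x; exact csInf_le (hbdd x) ⟨p, hp, rfl⟩
    have hgvalid : Valid f g := by
      constructor
      · intro x
        exact le_csInf (hne x) (by rintro _ ⟨p, hp, rfl⟩; exact hnonneg p hp x)
      · intro z hz
        by_contra hlt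
        push_neg at hlt
        set S : ℝ := ∑ r ∈ z.support, (z r : ℝ) with hS
        have hS0 : 0 ≤ S := Finset.sum_nonneg fun r _ => by positivity
        set ε : ℝ := (1 - ∑ r ∈ z.support, g r * (z r : ℝ)) / (S + 1) with hε
        have hεpos : 0 < ε := by
          apply div_pos (by linarith) (by linarith)
        obtain ⟨p, hpc, hp⟩ := chain_approx c' hc'chain hnonneg _ hy' z.support hεpos
        have h1 : (1 : ℝ) ≤ ∑ r ∈ z.support, p r * (z r : ℝ) :=
          (hc'valid p hpc).2 z hz
        have h2 : ∑ r ∈ z.support, p r * (z r : ℝ)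
            ≤ ∑ r ∈ z.support, (g r + ε) * (z r : ℝ) := by
          apply Finset.sum_le_sum
          intro r hr
          have := (hp r hr).le
          have hz0 : (0:ℝ) ≤ (z r : ℝ) := by positivity
          nlinarith
        have h3 : ∑ r ∈ z.support, (g r + ε) * (z r : ℝ)
            = (∑ r ∈ z.support, g r * (z r : ℝ)) + ε * S := by
          rw [hS, Finset.mul_sum, ← Finset.sum_add_distrib]
          congr 1; ext r; ring
        have hεS : ε * S < 1 - ∑ r ∈ z.support, g r * (z r : ℝ) := by
          rw [hε]
          rw [div_mul_eq_mul_div, div_lt_iff₀ (by linarith)]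
          nlinarith
        linarith
    exact ⟨OrderDual.toDual g, hgvalid, fun p hp => hglb _ ⟨p, hp, rfl⟩⟩


theorem stmt5 (f : ℝ) (hf : f ∈ Set.Ioo (0 : ℝ) 1) (π : ℝ → ℝ)
    (hπ : MinimalValid f π)
    (h : ∀ π' : ℝ → ℝ, MinimalValid f π' → Pset f π ⊆ Pset f π' → Pset f π = Pset f π') :
    IsWeakFacet f π := by
  refine ⟨hπ.1, fun π' hπ' hsub => ?_⟩
  obtain ⟨m, hm, hmle⟩ := exists_minimal_valid_le f π' hπ'
  have hsub' : Pset f π' ⊆ Pset f m := by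
    rintro y ⟨hfeas, hsum⟩
    refine ⟨hfeas, le_antisymm ?_ (hm.1.2 y hfeas)⟩
    rw [← hsum]
    exact Finset.sum_le_sum fun r _ => by
      have : (0:ℝ) ≤ (y r : ℝ) := by positivity
      nlinarith [hmle r]
  have heq := h m hm (hsub.trans hsub')
  exact Set.Subset.antisymm hsub (hsub'.trans heq.ge)
end
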